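/- For the planning tasks Π1 and Π2 over objects {a,b,c,d} with ternary predicate P, no actions, goal {P(a,b,c)}, and initial states s1 = {P(a,b,a), P(c,b,c), P(a,d,c), P(c,d,a)} and s2 = {P(a,b,c), P(c,b,a), P(a,d,a), P(c,d,c)}: h*(Π1) = ∞ and h*(Π2) = 0; moreover, for every pair of argument positions 1 ≤ i < j ≤ 3, the binary projections P_{i,j}(s1) and P_{i,j}(s2) are equal as sets of pairs, where P_{i,j}(s) = {(x,y) : ∃ assignment of the remaining position z with P-atom having x at position i and y at position j in s}. -/

import Mathlib

/-- A STRIPS domain: action type `A`, ground propositions `α`; each action has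
precondition, add and delete effects (finite sets of propositions) and a
nonnegative real cost. -/
structure Dom (A α : Type*) [DecidableEq α] where
  pre : A → Finset α
  add : A → Finset α
  del : A → Finset α
  cost : A → NNReal

variable {A α : Type*} [DecidableEq α]

/-- Applying action `a` to state `s`: `(s \ del(a)) ∪ add(a)`. -/
def Dom.applyAct (D : Dom A α) (a : A) (s : Finset α) : Finset α := (s \ D.del a) ∪ D.add a

/-- The actions of a sequence are successively applicable from `s`. -/
def Dom.appSeq (D : Dom A α) : Finset α → List A → Prop
  | _, [] => True
  | s, a :: rest => D.pre a ⊆ s ∧ D.appSeq (D.applyAct a s) rest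

/-- The state resulting from executing a sequence of actions from `s`. -/
def Dom.exec (D : Dom A α) : Finset α → List A → Finset α
  | s, [] => s
  | s, a :: rest => D.exec (D.applyAct a s) rest

/-- The cost of a plan: the sum of its action costs (in `ENNReal`). -/
noncomputable def Dom.planCost (D : Dom A α) (π : List A) : ENNReal :=
  (π.map fun a => (D.cost a : ENNReal)).sum

/-- The optimal heuristic `h*`: the infimum of costs of plans from `s` to a state
containing the goal `G`; `∞` (i.e. `sInf ∅`) if no plan exists. -/
noncomputable def Dom.hstar (D : Dom A α) (G s : Finset α) : ENNReal :=
  sInf {x | ∃ π : List A, D.appSeq s π ∧ G ⊆ D.exec s π ∧ x = D.planCost π}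

/-- The domain with no actions over ground atoms of a ternary predicate `P` on the four
objects `a = 0`, `b = 1`, `c = 2`, `d = 3`. -/
def D11 : Dom Empty (Fin 4 × Fin 4 × Fin 4) where
  pre := fun a => a.elim
  add := fun a => a.elim
  del := fun a => a.elim
  cost := fun a => a.elim

/-- The argument at position `i` (0-indexed) of a ternary atom. -/
def arg3 (t : Fin 4 × Fin 4 × Fin 4) (i : Fin 3) : Fin 4 :=
  if i = 0 then t.1 else if i = 1 then t.2.1 else t.2.2

/-- Binary projection of a set of ternary `P`-atoms onto argument positions `i < j`,
existentially quantifying the remaining position. -/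
def proj3 (i j : Fin 3) (s : Finset (Fin 4 × Fin 4 × Fin 4)) : Set (Fin 4 × Fin 4) :=
  {p | ∃ t ∈ s, arg3 t i = p.1 ∧ arg3 t j = p.2}

/-- Goal `{P(a,b,c)}`. -/
def G11 : Finset (Fin 4 × Fin 4 × Fin 4) := {(0, 1, 2)}

/-- Initial state of `Π1`: `{P(a,b,a), P(c,b,c), P(a,d,c), P(c,d,a)}`. -/
def s11 : Finset (Fin 4 × Fin 4 × Fin 4) := {(0, 1, 0), (2, 1, 2), (0, 3, 2), (2, 3, 0)}

/-- Initial state of `Π2`: `{P(a,b,c), P(c,b,a), P(a,d,a), P(c,d,c)}`. -/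
def s12 : Finset (Fin 4 × Fin 4 × Fin 4) := {(0, 1, 2), (2, 1, 0), (0, 3, 0), (2, 3, 2)}

/-!
Without actions the only plan is the empty one, so `h*` is `0` when the goal already holds in the
initial state and `∞` otherwise; `P(a,b,c)` lies in `s2` but not in `s1`. The projections agree
because in both states any two positions carry every combination of values, drawn from `{a, c}` at
positions 1 and 3 and from `{b, d}` at position 2.
-/

namespace Dom

theorem hstar_eq_zero_of_subset (D : Dom A α) {G s : Finset α} (h : G ⊆ s) :
    D.hstar G s = 0 :=
  nonpos_iff_eq_zero.mp <| sInf_le ⟨[], trivial, h, by simp [planCost]⟩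

theorem hstar_eq_top_of_not_subset [IsEmpty A] (D : Dom A α) {G s : Finset α}
    (h : ¬G ⊆ s) : D.hstar G s = ⊤ := by
  refine sInf_eq_top.mpr ?_
  rintro _ ⟨π, -, hG, -⟩
  obtain rfl : π = [] := List.eq_nil_of_subset_nil fun a _ => isEmptyElim a
  exact absurd hG h

end Dom

theorem proj3_eq_image (i j : Fin 3) (s : Finset (Fin 4 × Fin 4 × Fin 4)) :
    proj3 i j s = ↑(s.image fun t => (arg3 t i, arg3 t j)) := by
  ext p
  simp [proj3, Prod.ext_iff]

theorem proj3_s11_eq_proj3_s12 (i j : Fin 3) : proj3 i j s11 = proj3 i j s12 := by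
  rw [proj3_eq_image, proj3_eq_image, Finset.coe_inj]
  revert i j
  decide

/-- `h*(Π1) = ∞`, `h*(Π2) = 0`, yet all binary projections of the two initial states
coincide. -/
theorem hstar_and_projections_example11 :
    D11.hstar G11 s11 = ⊤ ∧ D11.hstar G11 s12 = 0 ∧
    ∀ i j : Fin 3, i < j → proj3 i j s11 = proj3 i j s12 :=
  ⟨D11.hstar_eq_top_of_not_subset (by decide), D11.hstar_eq_zero_of_subset (by decide),
    fun i j _ => proj3_s11_eq_proj3_s12 i j⟩
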